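/- arXiv:2409.15081 — 3 statements merged into one kernel-verified Lean document; each statement's English description precedes it below -/
import Mathlib

section
/- Let I be a monomial ideal in K[x_1,…,x_n] over a field K of characteristic 0, with support supp(I) = {m ∈ ℤ_{≥0}^n : x^m ∈ I}. Let α ∈ ℤ^n be such that there is an index k with α_k = −1, α_j ≥ 0 for j ≠ k, α + e_k ∈ ℤ_{≥0}^n \ supp(I), and α + e_k + e_j ∈ supp(I) for every j ∈ {1,…,n}. Then the homogeneous derivation ∂_{α, e_k^*} of K[x_1,…,x_n] sending x^m to m_k·x^{m+α} preserves the ideal I, i.e. ∂_{α,e_k^*}(I) ⊆ I. -/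
/-!
If `m k ≠ 0` then `∂(x^m) = m_k x^{m+α}`. Unless `m = e_k` (excluded since `x_k ∉ I`), `m`
dominates `e_k + e_j` for some `j`, so `m + α` dominates `α + e_k + e_j ∈ supp I` and `x^{m+α}`
is a multiple of a monomial of `I`.
-/

open MvPolynomial

namespace Finsupp

variable {σ : Type*}

theorem le_iff_natCast_le {a b : σ →₀ ℕ} :
    a ≤ b ↔ (fun i => (a i : ℤ)) ≤ (fun i => (b i : ℤ)) := by
  simp only [le_def, Pi.le_def, Nat.cast_le]

theorem natCast_add (a b : σ →₀ ℕ) :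
    (fun i => ((a + b) i : ℤ)) = (fun i => (a i : ℤ)) + (fun i => (b i : ℤ)) := by
  ext i
  simp

theorem natCast_single [DecidableEq σ] (k : σ) :
    (fun i => ((single k 1 : σ →₀ ℕ) i : ℤ)) = Pi.single k 1 := by
  ext i
  by_cases h : i = k <;> simp [h]

theorem exists_single_add_single_le {m : σ →₀ ℕ} {k : σ} (hk : m k ≠ 0) (hm : m ≠ single k 1) :
    ∃ j, single k 1 + single j 1 ≤ m := by
  have hkm : single k 1 ≤ m := single_le_iff.2 (Nat.one_le_iff_ne_zero.2 hk)
  obtain ⟨j, hj⟩ : (m - single k 1).support.Nonempty := by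
    rw [support_nonempty_iff]
    exact fun h => hm (le_antisymm (tsub_eq_zero_iff_le.1 h) hkm)
  refine ⟨j, add_comm (single k 1) _ ▸ add_le_of_le_tsub_right_of_le hkm ?_⟩
  exact single_le_iff.2 (Nat.one_le_iff_ne_zero.2 (mem_support_iff.1 hj))

end Finsupp

theorem derivation_preserves_ideal_general (K : Type) [Field K] (n : ℕ)
    (I : Ideal (MvPolynomial (Fin n) K))
    (hfull : ∀ i : Fin n, X i ∉ I)
    (α : Fin n → ℤ) (k : Fin n)
    (β : Fin n →₀ ℕ) (hβ : (fun i => (β i : ℤ)) = α + Pi.single k 1)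
    (hsupp : ∀ j : Fin n, ∀ γ : Fin n →₀ ℕ,
      ((fun i => (γ i : ℤ)) = α + Pi.single k 1 + Pi.single j 1) →
      monomial γ (1 : K) ∈ I) :
    ∀ m : Fin n →₀ ℕ, monomial m (1 : K) ∈ I →
      ∀ m' : Fin n →₀ ℕ, ((fun i => (m' i : ℤ)) = (fun i => (m i : ℤ)) + α) →
        (m k : K) • monomial m' (1 : K) ∈ I := by
  intro m hm m' hm'
  rcases eq_or_ne (m k) 0 with hk0 | hk0
  · simp [hk0]
  have hm_ne : m ≠ Finsupp.single k 1 := fun h => hfull k (by rw [h] at hm; exact hm)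
  obtain ⟨j, hjm⟩ := Finsupp.exists_single_add_single_le hk0 hm_ne
  have hγ : (fun i => ((β + Finsupp.single j 1 : Fin n →₀ ℕ) i : ℤ)) =
      α + Pi.single k 1 + Pi.single j 1 := by
    rw [Finsupp.natCast_add, hβ, Finsupp.natCast_single]
  have hγm' : β + Finsupp.single j 1 ≤ m' := by
    rw [Finsupp.le_iff_natCast_le, Finsupp.natCast_add, Finsupp.natCast_single,
      Finsupp.natCast_single] at hjm
    rw [Finsupp.le_iff_natCast_le, hγ, hm', add_assoc, add_comm _ α]
    exact add_le_add_right hjm α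
  rw [smul_monomial, smul_eq_mul, mul_one]
  exact I.mem_of_dvd (monomial_dvd_monomial.2 ⟨Or.inr hγm', one_dvd _⟩) (hsupp j _ hγ)

/-- Let `I` be a monomial ideal and `α ∈ ℤ^n` an outer degree with `α k = -1`,
`α j ≥ 0` for `j ≠ k`, such that `α + e k ∉ supp I` and `α + e k + e j ∈ supp I`
for all `j`. Then the homogeneous derivation `∂_{α, e_k^*} : x^m ↦ m_k · x^{m+α}`
preserves the ideal `I`. -/
theorem derivation_preserves_ideal (K : Type) [Field K] [CharZero K] (n : ℕ)
    (I : Ideal (MvPolynomial (Fin n) K))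
    (hmono : ∃ G : Set (Fin n →₀ ℕ),
      I = Ideal.span ((fun a => monomial a (1 : K)) '' G))
    (hfull : ∀ i : Fin n, X i ∉ I)
    (α : Fin n → ℤ) (k : Fin n)
    (hk : α k = -1) (hj : ∀ j : Fin n, j ≠ k → 0 ≤ α j)
    (β : Fin n →₀ ℕ) (hβ : (fun i => (β i : ℤ)) = α + Pi.single k 1)
    (hβI : monomial β (1 : K) ∉ I)
    (hsupp : ∀ j : Fin n, ∀ γ : Fin n →₀ ℕ,
      ((fun i => (γ i : ℤ)) = α + Pi.single k 1 + Pi.single j 1) →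
      monomial γ (1 : K) ∈ I) :
    ∀ m : Fin n →₀ ℕ, monomial m (1 : K) ∈ I →
      ∀ m' : Fin n →₀ ℕ, ((fun i => (m' i : ℤ)) = (fun i => (m i : ℤ)) + α) →
        (m k : K) • monomial m' (1 : K) ∈ I :=
  derivation_preserves_ideal_general K n I hfull α k β hβ hsupp
end

section
/- Let I be a monomial ideal in K[x] = K[x_1,…,x_n] (char K = 0) and let α ∈ ℤ_{≥0}^n. For i ∈ {1,…,n}, the derivation of K[x]/I induced by ∂_{α,e_i^*} (sending the class of x^m to m_i times the class of x^{m+α}) is the zero derivation if and only if α + e_i ∈ supp(I). -/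
open MvPolynomial

theorem MvPolynomial.monomial_one_mem_of_le {σ R : Type*} [CommSemiring R]
    {I : Ideal (MvPolynomial σ R)} {a b : σ →₀ ℕ} (hab : a ≤ b) (ha : monomial a (1 : R) ∈ I) :
    monomial b (1 : R) ∈ I :=
  I.mem_of_dvd (monomial_dvd_monomial.2 ⟨Or.inr hab, one_dvd _⟩) ha

theorem induced_derivation_eq_zero_iff_general (K : Type) [Field K] (n : ℕ)
    (I : Ideal (MvPolynomial (Fin n) K))
    (α : Fin n →₀ ℕ) (i : Fin n) :
    (∀ m : Fin n →₀ ℕ, (m i : K) • monomial (m + α) (1 : K) ∈ I) ↔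
      monomial (α + Finsupp.single i 1) (1 : K) ∈ I := by
  refine ⟨fun h => by simpa [add_comm] using h (Finsupp.single i 1), fun h m => ?_⟩
  rcases eq_or_ne (m i) 0 with hm | hm
  · simp [hm]
  · have hle : α + Finsupp.single i 1 ≤ m + α := by
      rw [add_comm m]
      exact add_le_add_right (Finsupp.single_le_iff.2 (Nat.one_le_iff_ne_zero.2 hm)) α
    exact Submodule.smul_of_tower_mem I _ (monomial_one_mem_of_le hle h)

/-- For a monomial ideal `I` and an inner degree `α ∈ ℤ_{≥0}^n`, the derivation of
`K[x]/I` induced by `∂_{α,e_i^*}` (sending the class of `x^m` to `m_i` times the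
class of `x^{m+α}`) is zero if and only if `α + e_i ∈ supp I`. -/
theorem induced_derivation_eq_zero_iff (K : Type) [Field K] [CharZero K] (n : ℕ)
    (I : Ideal (MvPolynomial (Fin n) K))
    (hmono : ∃ G : Set (Fin n →₀ ℕ),
      I = Ideal.span ((fun a => monomial a (1 : K)) '' G))
    (α : Fin n →₀ ℕ) (i : Fin n) :
    (∀ m : Fin n →₀ ℕ, (m i : K) • monomial (m + α) (1 : K) ∈ I) ↔
      monomial (α + Finsupp.single i 1) (1 : K) ∈ I :=
  induced_derivation_eq_zero_iff_general K n I α i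
end

section
/- Let I be a monomial ideal in K[x_1,…,x_n] (char K = 0), α ∈ ℤ_{≥0}^n, and E_α = {i : α + e_i ∉ supp(I)}. Then the derivations of K[x]/I induced by ∂_{α,e_i^*} for i ∈ E_α are linearly independent over K. Consequently, the space of homogeneous derivations of K[x]/I of degree α has dimension exactly #E_α. -/
/-! For `i ∉ E_α` the induced derivation vanishes: it sends `x^m` to `m_i x^{m+α}`, and when
`m_i > 0` that monomial is a multiple of `x^{α+e_i} ∈ I`. For `i ∈ E_α`, evaluating at the
variables sends `D_i` to the vector whose only nonzero entry is `x^{α+e_i} ≠ 0`, at position `i`;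
these are linearly independent and span everything spanned by all the `D_i`. -/

open MvPolynomial

namespace MvPolynomial

variable {σ K : Type*}

/-- `D` is the map induced on `K[σ]/I` by `∂_{α,e_i^*} : x^m ↦ m_i x^{m+α}`. -/
def IsInducedDerivation [CommRing K] (I : Ideal (MvPolynomial σ K)) (α : σ →₀ ℕ) (i : σ)
    (D : (MvPolynomial σ K ⧸ I) →ₗ[K] (MvPolynomial σ K ⧸ I)) : Prop :=
  ∀ m : σ →₀ ℕ, D (Ideal.Quotient.mk I (monomial m 1)) =
    (m i : K) • Ideal.Quotient.mk I (monomial (m + α) 1)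

theorem monomial_mem_of_le [CommSemiring K] {I : Ideal (MvPolynomial σ K)} {a b : σ →₀ ℕ}
    (ha : monomial a (1 : K) ∈ I) (hab : a ≤ b) (c : K) : monomial b c ∈ I :=
  I.mem_of_dvd (monomial_dvd_monomial.2 ⟨Or.inr hab, one_dvd c⟩) ha

namespace IsInducedDerivation

variable [CommRing K] {I : Ideal (MvPolynomial σ K)} {α : σ →₀ ℕ} {i : σ}
  {D : (MvPolynomial σ K ⧸ I) →ₗ[K] (MvPolynomial σ K ⧸ I)}

theorem eq_zero (hD : IsInducedDerivation I α i D)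
    (hI : monomial (α + Finsupp.single i 1) (1 : K) ∈ I) : D = 0 := by
  have hmk : D ∘ₗ (Ideal.Quotient.mkₐ K I).toLinearMap = 0 := by
    refine (basisMonomials σ K).ext fun m => ?_
    simp only [coe_basisMonomials, LinearMap.comp_apply, AlgHom.toLinearMap_apply,
      Ideal.Quotient.mkₐ_eq_mk, hD m, LinearMap.zero_apply]
    by_cases hm : m i = 0
    · simp [hm]
    · have hle : α + Finsupp.single i 1 ≤ m + α := by
        rw [add_comm]
        exact add_le_add_left (Finsupp.single_le_iff.2 (Nat.one_le_iff_ne_zero.2 hm)) α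
      rw [Ideal.Quotient.eq_zero_iff_mem.2 (monomial_mem_of_le hI hle 1), smul_zero]
  exact (LinearMap.cancel_right (Ideal.Quotient.mkₐ_surjective K I)).1
    (hmk.trans (LinearMap.zero_comp _).symm)

theorem apply_X [DecidableEq σ] (hD : IsInducedDerivation I α i D) (j : σ) :
    D (Ideal.Quotient.mk I (X j)) =
      if j = i then Ideal.Quotient.mk I (monomial (Finsupp.single i 1 + α) 1) else 0 := by
  rw [X, hD, Finsupp.single_apply]
  by_cases h : j = i
  · subst h; simp
  · simp [h]

end IsInducedDerivation

theorem linearIndependent_of_isInducedDerivation [Field K] {I : Ideal (MvPolynomial σ K)}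
    {α : σ →₀ ℕ} {D : σ → (MvPolynomial σ K ⧸ I) →ₗ[K] (MvPolynomial σ K ⧸ I)}
    (hD : ∀ i, IsInducedDerivation I α i (D i)) {s : Set σ}
    (hs : ∀ i ∈ s, monomial (α + Finsupp.single i 1) (1 : K) ∉ I) :
    LinearIndependent K (fun i : s => D i) := by
  classical
  let evalX :
      ((MvPolynomial σ K ⧸ I) →ₗ[K] (MvPolynomial σ K ⧸ I)) →ₗ[K] (s → MvPolynomial σ K ⧸ I) :=
    LinearMap.pi fun j => LinearMap.applyₗ (Ideal.Quotient.mk I (X j))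
  refine LinearIndependent.of_comp evalX ?_
  have hevalX : evalX ∘ (fun i : s => D i) = fun i : s => (Pi.single i
      (Ideal.Quotient.mk I (monomial (Finsupp.single (i : σ) 1 + α) 1)) : s → _) := by
    funext i j
    simp [evalX, (hD i).apply_X, Pi.single_apply, Subtype.ext_iff]
  rw [hevalX]
  refine Pi.linearIndependent_single_of_ne_zero fun i => ?_
  rw [Ne, Ideal.Quotient.eq_zero_iff_mem, add_comm]
  exact hs i i.2

end MvPolynomial

theorem Submodule.span_range_eq_span_range_subtype {R M ι : Type*} [Semiring R] [AddCommMonoid M]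
    [Module R M] {f : ι → M} {s : Set ι} (hf : ∀ i ∉ s, f i = 0) :
    span R (Set.range f) = span R (Set.range fun i : s => f i) := by
  refine le_antisymm ?_ (span_mono (Set.range_comp_subset_range _ _))
  rw [← span_insert_zero (s := Set.range fun i : s => f i)]
  refine span_mono (Set.range_subset_iff.2 fun i => ?_)
  by_cases hi : i ∈ s
  · exact Or.inr ⟨⟨i, hi⟩, rfl⟩
  · exact Or.inl (hf i hi)

theorem induced_derivations_linearIndependent_general (K : Type) [Field K]
    (n : ℕ) (I : Ideal (MvPolynomial (Fin n) K))
    (α : Fin n →₀ ℕ)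
    (D : Fin n → ((MvPolynomial (Fin n) K ⧸ I) →ₗ[K] (MvPolynomial (Fin n) K ⧸ I)))
    (hD : ∀ (i : Fin n) (m : Fin n →₀ ℕ),
      D i (Ideal.Quotient.mk I (monomial m (1 : K))) =
        (m i : K) • Ideal.Quotient.mk I (monomial (m + α) (1 : K)))
    (Eα : Finset (Fin n))
    (hE : ∀ i : Fin n, i ∈ Eα ↔ monomial (α + Finsupp.single i 1) (1 : K) ∉ I) :
    LinearIndependent K (fun i : Eα => D i) ∧
      Module.finrank K (Submodule.span K (Set.range D)) = Eα.card := by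
  have hli : LinearIndependent K (fun i : Eα => D i) :=
    linearIndependent_of_isInducedDerivation hD fun i hi => (hE i).1 hi
  have hspan : Submodule.span K (Set.range D) = Submodule.span K (Set.range fun i : Eα => D i) :=
    Submodule.span_range_eq_span_range_subtype fun i hi =>
      MvPolynomial.IsInducedDerivation.eq_zero (hD i) (not_not.1 (mt (hE i).2 hi))
  refine ⟨hli, ?_⟩
  rw [hspan, finrank_span_eq_card hli, Fintype.card_coe]

/-- Let `I` be a monomial ideal, `α ∈ ℤ_{≥0}^n` and
`E_α = {i : α + e_i ∉ supp I}`. The derivations of `A = K[x]/I` induced by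
`∂_{α,e_i^*}` for `i ∈ E_α` are linearly independent over `K`; consequently the
space of homogeneous derivations of `A` of degree `α` (spanned by all the induced
`∂_{α,e_i^*}`) has dimension exactly `#E_α`. -/
theorem induced_derivations_linearIndependent (K : Type) [Field K] [CharZero K]
    (n : ℕ) (I : Ideal (MvPolynomial (Fin n) K))
    (hmono : ∃ G : Set (Fin n →₀ ℕ),
      I = Ideal.span ((fun a => monomial a (1 : K)) '' G))
    (α : Fin n →₀ ℕ)
    (D : Fin n → ((MvPolynomial (Fin n) K ⧸ I) →ₗ[K] (MvPolynomial (Fin n) K ⧸ I)))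
    (hD : ∀ (i : Fin n) (m : Fin n →₀ ℕ),
      D i (Ideal.Quotient.mk I (monomial m (1 : K))) =
        (m i : K) • Ideal.Quotient.mk I (monomial (m + α) (1 : K)))
    (Eα : Finset (Fin n))
    (hE : ∀ i : Fin n, i ∈ Eα ↔ monomial (α + Finsupp.single i 1) (1 : K) ∉ I) :
    LinearIndependent K (fun i : Eα => D i) ∧
      Module.finrank K (Submodule.span K (Set.range D)) = Eα.card :=
  induced_derivations_linearIndependent_general K n I α D hD Eα hE
end
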